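/- Fix K ≥ 1, positive reals λ_1,…,λ_K with Λ = Σ_k λ_k, a total n ∈ ℕ, and nonnegative integers a_1,…,a_K with Σ_k a_k = n. For ℓ ∈ ℕ large enough that λ_k/ℓ ≤ 1 for all k, define f_ℓ(a_1,…,a_K) = Π_{k=1}^K C(ℓ, a_k) (λ_k/ℓ)^{a_k} (1 − λ_k/ℓ)^{ℓ − a_k}. Then, as ℓ → ∞, the ratio f_ℓ(a_1,…,a_K) / (Σ over all tuples (a'_1,…,a'_K) of nonnegative integers with Σ_k a'_k = n of f_ℓ(a'_1,…,a'_K)) converges to the multinomial probability (n! / Π_{k=1}^K a_k!) · Π_{k=1}^K (λ_k / Λ)^{a_k}. -/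

import Mathlib

/-! Each factor of `f ℓ b` is the probability that a binomial variable with mean `λ k` takes
the value `b k`, so by the Poisson limit theorem `f ℓ b → ∏ k, e^(-λ k) λ k ^ b k / (b k)!`.
By the multinomial theorem these Poisson weights, summed over the configurations of total `n`,
give `e^(-Λ) Λ ^ n / n!` (a sum of independent Poisson variables is Poisson), and the ratio of
the two limits is the multinomial probability. -/

open Filter Nat Topology Finset

lemma tendsto_choose_mul_div_pow_mul_one_sub_div_pow (c : ℝ) (m : ℕ) :
    Tendsto (fun ℓ : ℕ => (ℓ.choose m : ℝ) * (c / ℓ) ^ m * (1 - c / ℓ) ^ (ℓ - m))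
      atTop (𝓝 (Real.exp (-c) * c ^ m / m !)) := by
  refine ProbabilityTheory.tendsto_choose_mul_pow_of_tendsto_mul_atTop m ?_
  refine tendsto_const_nhds.congr' ?_
  filter_upwards [eventually_ge_atTop 1] with ℓ hℓ
  field_simp

section Antidiagonal

variable {ι : Type*} [DecidableEq ι]

lemma sum_piAntidiag_prod_pow_div_factorial {R : Type*} [Field R] [CharZero R]
    (s : Finset ι) (x : ι → R) (n : ℕ) :
    ∑ b ∈ piAntidiag s n, ∏ i ∈ s, x i ^ b i / (b i)! = (∑ i ∈ s, x i) ^ n / n ! := by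
  rw [sum_pow_eq_sum_piAntidiag, sum_div]
  refine sum_congr rfl fun b hb => ?_
  have hspec : (∏ i ∈ s, ((b i)! : R)) * multinomial s b = n ! := by
    rw [← (mem_piAntidiag.1 hb).1]
    exact_mod_cast multinomial_spec s b
  have hmult : (multinomial s b : R) ≠ 0 := mod_cast (multinomial_pos s b).ne'
  rw [prod_div_distrib, ← hspec, mul_comm _ (multinomial s b : R), mul_div_mul_left _ _ hmult]

lemma sum_piAntidiag_prod_exp_neg_mul_pow_div_factorial (s : Finset ι) (x : ι → ℝ) (n : ℕ) :
    ∑ b ∈ piAntidiag s n, ∏ i ∈ s, Real.exp (-x i) * x i ^ b i / (b i)! =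
      Real.exp (-∑ i ∈ s, x i) * (∑ i ∈ s, x i) ^ n / n ! := by
  simp_rw [mul_div_assoc, prod_mul_distrib, ← mul_sum, sum_piAntidiag_prod_pow_div_factorial,
    ← Real.exp_sum, sum_neg_distrib]

end Antidiagonal

lemma prod_exp_neg_mul_pow_div_factorial_div {ι : Type*} (s : Finset ι) (x : ι → ℝ)
    (a : ι → ℕ) :
    (∏ i ∈ s, Real.exp (-x i) * x i ^ a i / (a i)!) /
        (Real.exp (-∑ i ∈ s, x i) * (∑ i ∈ s, x i) ^ (∑ i ∈ s, a i) /
          (∑ i ∈ s, a i)!) =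
      (∑ i ∈ s, a i)! / (∏ i ∈ s, ((a i)! : ℝ)) *
        ∏ i ∈ s, (x i / ∑ j ∈ s, x j) ^ a i := by
  simp only [prod_div_distrib, prod_mul_distrib, ← Real.exp_sum, sum_neg_distrib, div_pow,
    prod_pow_eq_pow_sum]
  field_simp

theorem conditioned_binomial_tendsto_multinomial_general (K : ℕ)
    (lam : Fin K → ℝ) (hlam : ∀ k, 0 < lam k) (Lam : ℝ) (hLam : Lam = ∑ k : Fin K, lam k)
    (n : ℕ) (a : Fin K → ℕ) (ha : ∑ k : Fin K, a k = n)
    (f : ℕ → (Fin K → ℕ) → ℝ)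
    (hf : ∀ ℓ : ℕ, ∀ b : Fin K → ℕ,
      f ℓ b = ∏ k : Fin K,
        (Nat.choose ℓ (b k) : ℝ) * (lam k / ℓ) ^ (b k) * (1 - lam k / ℓ) ^ (ℓ - b k)) :
    Tendsto
      (fun ℓ : ℕ => f ℓ a / ∑ b ∈ Finset.Nat.antidiagonalTuple K n, f ℓ b)
      atTop
      (nhds ((n ! : ℝ) / (∏ k : Fin K, ((a k)! : ℝ)) *
        ∏ k : Fin K, (lam k / Lam) ^ (a k))) := by
  subst hLam ha
  have hf_lim (b : Fin K → ℕ) : Tendsto (f · b) atTop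
      (𝓝 (∏ k, Real.exp (-lam k) * lam k ^ b k / (b k)!)) := by
    simpa only [hf] using tendsto_finsetProd univ
      fun k _ => tendsto_choose_mul_div_pow_mul_one_sub_div_pow (lam k) (b k)
  have hsum_lim : Tendsto (fun ℓ => ∑ b ∈ Nat.antidiagonalTuple K (∑ k, a k), f ℓ b) atTop
      (𝓝 (Real.exp (-∑ k, lam k) * (∑ k, lam k) ^ (∑ k, a k) / (∑ k, a k)!)) := by
    rw [← sum_piAntidiag_prod_exp_neg_mul_pow_div_factorial,
      piAntidiag_univ_fin_eq_antidiagonalTuple]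
    exact tendsto_finsetSum _ fun b _ => hf_lim b
  have hlam_pow : (∑ k, lam k) ^ (∑ k, a k) ≠ 0 := by
    rcases isEmpty_or_nonempty (Fin K) with _ | _
    · simp
    · exact pow_ne_zero _ (sum_pos (fun k _ => hlam k) univ_nonempty).ne'
  have hlim := (hf_lim a).div hsum_lim
    (div_ne_zero (mul_ne_zero (Real.exp_ne_zero _) hlam_pow) (by positivity))
  rwa [prod_exp_neg_mul_pow_div_factorial_div] at hlim

/-- **Conditioned binomial product converges to the multinomial law
(coarse-grained side of ensemble equivalence).**
Fix `K ≥ 1`, rates `λ k > 0` with `Λ = ∑ λ k`, a total `n`, and a configuration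
`a : Fin K → ℕ` with `∑ a k = n`.  For `ℓ` the joint coarse-grained weight is
`f ℓ a = ∏ k, C(ℓ, a k) (λ k/ℓ)^(a k) (1 − λ k/ℓ)^(ℓ − a k)` (each coordinate an
independent `Binomial(ℓ, λ k/ℓ)`).  Conditioning on the total `n`, i.e. normalizing
over all configurations summing to `n`, the weight of `a` converges as `ℓ → ∞` to the
multinomial probability `(n! / ∏ (a k)!) · ∏ (λ k / Λ)^(a k)`. -/
theorem conditioned_binomial_tendsto_multinomial (K : ℕ) (hK : 1 ≤ K)
    (lam : Fin K → ℝ) (hlam : ∀ k, 0 < lam k) (Lam : ℝ) (hLam : Lam = ∑ k : Fin K, lam k)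
    (n : ℕ) (a : Fin K → ℕ) (ha : ∑ k : Fin K, a k = n)
    (f : ℕ → (Fin K → ℕ) → ℝ)
    (hf : ∀ ℓ : ℕ, ∀ b : Fin K → ℕ,
      f ℓ b = ∏ k : Fin K,
        (Nat.choose ℓ (b k) : ℝ) * (lam k / ℓ) ^ (b k) * (1 - lam k / ℓ) ^ (ℓ - b k)) :
    Tendsto
      (fun ℓ : ℕ => f ℓ a / ∑ b ∈ Finset.Nat.antidiagonalTuple K n, f ℓ b)
      atTop
      (nhds ((n ! : ℝ) / (∏ k : Fin K, ((a k)! : ℝ)) *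
        ∏ k : Fin K, (lam k / Lam) ^ (a k))) :=
  conditioned_binomial_tendsto_multinomial_general K lam hlam Lam hLam n a ha f hf
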